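/- Let E be a finite type of edges and P a finite set of paths, each path a finite set of edges. For finite edge sets C define cov(C) = {p ∈ P : ∃ e ∈ C, e ∈ p} and f(C) = |cov(C)|. Let conf : E → ℝ be positive and let p be a nonempty path with weights Pr(e | p) = conf(e) / Σ_{e' ∈ p} conf(e'). For C ⊆ C' define the extended conditional expected marginal benefit Δ(p | C; C') = Σ_{e ∈ p} Pr(e | p) · (f(C ∪ {e}) − f(C)). Then Δ(p | C; C') ≥ Δ(p | C'; C') for all finite edge sets C ⊆ C'; i.e., f satisfies the strong adaptive submodularity inequality of the Golovin–Krause framework in this setting where the transition probabilities are state-independent. -/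

import Mathlib

/-- The utility function: the number of paths in `P` (each path a finite set of edges)
eliminated by removing the edge set `C`. -/
def pathsCovered {E : Type*} [DecidableEq E] (P : Finset (Finset E)) (C : Finset E) : ℕ :=
  (P.filter (fun p => ∃ e ∈ C, e ∈ p)).card

/-- The Bradley–Terry removal probability of edge `e` in the proposed path `p`;
it does not depend on the current state. -/
noncomputable def btProb {E : Type*} (conf : E → ℝ) (p : Finset E) (e : E) : ℝ :=
  conf e / ∑ e' ∈ p, conf e'

/-- The extended conditional expected marginal benefit `Δ(p | C; C')` for removed sets
`C ⊆ C'`: the outcome probabilities are taken in the later state with removed set `C'`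
(but are state-independent here), while the marginal gains are taken at `C`. -/
noncomputable def deltaExt {E : Type*} [DecidableEq E] (P : Finset (Finset E))
    (conf : E → ℝ) (p : Finset E) (C C' : Finset E) : ℝ :=
  ∑ e ∈ p, btProb conf p e *
    ((pathsCovered P (insert e C) : ℝ) - (pathsCovered P C : ℝ))

lemma pathsCovered_insert {E : Type*} [DecidableEq E] (P : Finset (Finset E))
    (C : Finset E) (e : E) :
    pathsCovered P (insert e C) =
      pathsCovered P C + (P.filter (fun q => e ∈ q ∧ ¬ ∃ e' ∈ C, e' ∈ q)).card := by
  classical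
  unfold pathsCovered
  have h : P.filter (fun q => ∃ e' ∈ insert e C, e' ∈ q) =
      P.filter (fun q => ∃ e' ∈ C, e' ∈ q) ∪
      P.filter (fun q => e ∈ q ∧ ¬ ∃ e' ∈ C, e' ∈ q) := by
    ext q
    simp only [Finset.mem_filter, Finset.mem_union, Finset.mem_insert]
    constructor
    · rintro ⟨hq, e', (rfl | hC), he'⟩
      · by_cases h : ∃ e'' ∈ C, e'' ∈ q
        · exact Or.inl ⟨hq, h⟩
        · exact Or.inr ⟨hq, he', h⟩
      · exact Or.inl ⟨hq, e', hC, he'⟩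
    · rintro (⟨hq, e', hC, he'⟩ | ⟨hq, he, _⟩)
      · exact ⟨hq, e', Or.inr hC, he'⟩
      · exact ⟨hq, e, Or.inl rfl, he⟩
  rw [h, Finset.card_union_of_disjoint]
  rw [Finset.disjoint_filter]
  rintro q _ h1 ⟨_, h2⟩
  exact h2 h1

lemma marginal_antitone {E : Type*} [DecidableEq E] (P : Finset (Finset E))
    {C C' : Finset E} (hCC' : C ⊆ C') (e : E) :
    (pathsCovered P (insert e C') : ℝ) - (pathsCovered P C' : ℝ) ≤
      (pathsCovered P (insert e C) : ℝ) - (pathsCovered P C : ℝ) := by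
  classical
  rw [pathsCovered_insert, pathsCovered_insert]
  push_cast
  ring_nf
  have : (P.filter (fun q => e ∈ q ∧ ¬ ∃ e' ∈ C', e' ∈ q)).card ≤
      (P.filter (fun q => e ∈ q ∧ ¬ ∃ e' ∈ C, e' ∈ q)).card := by
    apply Finset.card_le_card
    apply Finset.monotone_filter_right
    rintro q _ ⟨he, h⟩
    exact ⟨he, fun ⟨e', hC, he'⟩ => h ⟨e', hCC' hC, he'⟩⟩
  exact_mod_cast this

/-- Strong adaptive submodularity: for all removed sets `C ⊆ C'` and every nonempty
path `p`, `Δ(p | C; C') ≥ Δ(p | C'; C')`. -/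
theorem deltaExt_strong_adaptive_submodular {E : Type*} [Fintype E] [DecidableEq E]
    (P : Finset (Finset E)) (conf : E → ℝ) (hconf : ∀ e, 0 < conf e)
    (C C' : Finset E) (hCC' : C ⊆ C') (p : Finset E) (hp : p.Nonempty) :
    deltaExt P conf p C' C' ≤ deltaExt P conf p C C' := by
  unfold deltaExt
  apply Finset.sum_le_sum
  intro e he
  apply mul_le_mul_of_nonneg_left (marginal_antitone P hCC' e)
  unfold btProb
  apply div_nonneg (hconf e).le
  exact Finset.sum_nonneg fun e' _ => (hconf e').le
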